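/- Let L(z) = M_T(z/2)·M_V(z)·M_T(z/2) be the leapfrog matrix for the harmonic oscillator, and let α₁ = 1/(2 − 2^{1/3}·exp(2πi/3)), α₂ = 1 − 2α₁ (the complex triple-jump coefficients with k = 1). Then the palindromic composition T(h) = L(α₁ h)·L(α₂ h)·L(α₁ h) satisfies: (fun h : ℝ => T(h) − M_H(h)) is O(h⁵) as h → 0, i.e. the complex triple-jump composition S_{α₁h} ∘ S_{α₂h} ∘ S_{α₁h} is a method of order 4. -/

import Mathlib

open Matrix Asymptotics Filter

attribute [local instance] Matrix.normedAddCommGroup Matrix.normedSpace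

/-- Exact evolution matrix of the harmonic oscillator `q' = p`, `p' = -q`. -/
noncomputable def MH (z : ℂ) : Matrix (Fin 2) (Fin 2) ℂ :=
  !![Complex.cos z, Complex.sin z; -Complex.sin z, Complex.cos z]

/-- Exact evolution matrix of the kinetic part. -/
def MT (z : ℂ) : Matrix (Fin 2) (Fin 2) ℂ := !![1, z; 0, 1]

/-- Exact evolution matrix of the potential part. -/
def MV (z : ℂ) : Matrix (Fin 2) (Fin 2) ℂ := !![1, 0; -z, 1]

/-- The leapfrog/Strang splitting matrix. -/
noncomputable def L (z : ℂ) : Matrix (Fin 2) (Fin 2) ℂ := MT (z / 2) * MV z * MT (z / 2)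

/-- The complex triple-jump coefficient `α₁ = 1/(2 − 2^{1/3} e^{2πi/3})` (`k = 1`). -/
noncomputable def β₁ : ℂ :=
  (2 - ((2 : ℝ) ^ ((1 : ℝ) / 3) : ℝ) * Complex.exp (2 * Real.pi * Complex.I / 3))⁻¹

/-- The coefficient `α₂ = 1 − 2α₁`. -/
noncomputable def β₂ : ℂ := 1 - 2 * β₁

/-- The complex triple-jump palindromic composition `S_{α₁h} ∘ S_{α₂h} ∘ S_{α₁h}`. -/
noncomputable def Tjump (h : ℝ) : Matrix (Fin 2) (Fin 2) ℂ :=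
  L (β₁ * (h : ℂ)) * L (β₂ * (h : ℂ)) * L (β₁ * (h : ℂ))

/-! The leapfrog matrix is `L z = !![1 - z²/2, z - z³/4; -z, 1 - z²/2]`, so the triple product
`L (a z) L (b z) L (a z)` is a matrix of polynomials in `z`. Multiplying out, it agrees with the
degree-4 Taylor polynomial of `MH z` up to a remainder `z⁵ R(z)` as soon as `2a + b = 1` and
`2a³ + b³ = 0`. The second condition holds for `a = 1/(2 - c)`, `b = -c/(2 - c)` whenever `c³ = 2`,
in particular for `c = 2^{1/3} e^{2πi/3}`. The Taylor remainders of `cos` and `sin` are `O(z⁵)`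
by the exponential series. -/

open Complex Finset

lemma exp_sub_sum_range_isBigO (n : ℕ) :
    (fun z : ℂ => exp z - ∑ m ∈ range n, z ^ m / m.factorial) =O[nhds 0] (· ^ n) := by
  refine isBigO_iff.2 ⟨2 / n.factorial, ?_⟩
  filter_upwards [Metric.ball_mem_nhds (0 : ℂ) one_half_pos] with z hz
  rw [mem_ball_zero_iff] at hz
  have hsmall : ‖z‖ / n.succ ≤ 1 / 2 :=
    (div_le_self (norm_nonneg z) (by simp)).trans hz.le
  calc ‖exp z - ∑ m ∈ range n, z ^ m / m.factorial‖ ≤ ‖z‖ ^ n / n.factorial * 2 :=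
        exp_bound' hsmall
    _ = 2 / n.factorial * ‖z ^ n‖ := by rw [norm_pow]; ring

lemma exp_mul_sub_sum_range_isBigO (c : ℂ) (n : ℕ) :
    (fun z : ℂ => exp (c * z) - ∑ m ∈ range n, (c * z) ^ m / m.factorial) =O[nhds 0]
      (· ^ n) := by
  have hc : Tendsto (fun z : ℂ => c * z) (nhds 0) (nhds 0) := by
    simpa using (continuous_const_mul c).tendsto 0
  refine ((exp_sub_sum_range_isBigO n).comp_tendsto hc).trans ?_
  simpa only [Function.comp_def, mul_pow] using
    (isBigO_refl (· ^ n) (nhds (0 : ℂ))).const_mul_left (c ^ n)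

lemma cos_sub_taylor_isBigO :
    (fun z : ℂ => cos z - (1 - z ^ 2 / 2 + z ^ 4 / 24)) =O[nhds 0] (· ^ 5) := by
  refine (((exp_mul_sub_sum_range_isBigO I 5).add
    (exp_mul_sub_sum_range_isBigO (-I) 5)).const_mul_left (1 / 2)).congr_left fun z => ?_
  simp only [sum_range_succ, sum_range_zero, cos, Nat.factorial]
  ring_nf
  simp only [I_sq, I_pow_four]
  ring

lemma sin_sub_taylor_isBigO :
    (fun z : ℂ => sin z - (z - z ^ 3 / 6)) =O[nhds 0] (· ^ 5) := by
  refine (((exp_mul_sub_sum_range_isBigO (-I) 5).sub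
    (exp_mul_sub_sum_range_isBigO I 5)).const_mul_left (I / 2)).congr_left fun z => ?_
  simp only [sum_range_succ, sum_range_zero, sin, Nat.factorial]
  ring_nf
  simp only [I_sq, I_pow_four]
  ring

lemma isBigO_pow_smul {𝕜 E : Type*} [NormedField 𝕜] [NormedAddCommGroup E] [NormedSpace 𝕜 E]
    {f : 𝕜 → E} (hf : ContinuousAt f 0) (n : ℕ) :
    (fun z : 𝕜 => z ^ n • f z) =O[nhds 0] (· ^ n) := by
  simpa using (isBigO_refl (· ^ n) (nhds (0 : 𝕜))).smul (hf.tendsto.isBigO_one 𝕜)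

noncomputable def MHTaylor (z : ℂ) : Matrix (Fin 2) (Fin 2) ℂ :=
  !![1 - z ^ 2 / 2 + z ^ 4 / 24, z - z ^ 3 / 6; -(z - z ^ 3 / 6), 1 - z ^ 2 / 2 + z ^ 4 / 24]

lemma MH_sub_MHTaylor_isBigO : (fun z : ℂ => MH z - MHTaylor z) =O[nhds 0] (· ^ 5) := by
  refine isBigO_pi.2 fun i => isBigO_pi.2 fun j => ?_
  fin_cases i <;> fin_cases j
  · simpa [MH, MHTaylor] using cos_sub_taylor_isBigO
  · simpa [MH, MHTaylor] using sin_sub_taylor_isBigO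
  · refine sin_sub_taylor_isBigO.neg_left.congr_left fun z => ?_
    simp [MH, MHTaylor]
    ring
  · simpa [MH, MHTaylor] using cos_sub_taylor_isBigO

lemma L_eq (z : ℂ) : L z = !![1 - z ^ 2 / 2, z - z ^ 3 / 4; -z, 1 - z ^ 2 / 2] := by
  rw [L, MT, MV, Matrix.mul_fin_two, Matrix.mul_fin_two]
  ext i j
  fin_cases i <;> fin_cases j <;> simp <;> ring

noncomputable def tripleJumpRemainder (a z : ℂ) : Matrix (Fin 2) (Fin 2) ℂ :=
  let p := a ^ 2 * (a - 1) ^ 2 * (2 * a - 1)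
  !![a * p * z / 8, a ^ 2 * (1 - a) ^ 3 / 4 + a ^ 2 * p * z ^ 2 / 16; p / 4, a * p * z / 8]

lemma L_mul_L_mul_L_eq (a b z : ℂ) (hb : b = 1 - 2 * a) (hcube : 2 * a ^ 3 + b ^ 3 = 0) :
    L (a * z) * L (b * z) * L (a * z) = MHTaylor z + z ^ 5 • tripleJumpRemainder a z := by
  subst hb
  rw [L_eq, L_eq, Matrix.mul_fin_two, Matrix.mul_fin_two, MHTaylor, tripleJumpRemainder]
  ext i j
  fin_cases i <;> fin_cases j <;> simp
  · linear_combination (-(z ^ 4) / 24) * hcube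
  · linear_combination (-(z ^ 3) / 12) * hcube
  · linear_combination (-(z ^ 3) / 6) * hcube
  · linear_combination (-(z ^ 4) / 24) * hcube

lemma L_mul_L_mul_L_sub_MH_isBigO (a b : ℂ) (hb : b = 1 - 2 * a)
    (hcube : 2 * a ^ 3 + b ^ 3 = 0) :
    (fun z : ℂ => L (a * z) * L (b * z) * L (a * z) - MH z) =O[nhds 0] (· ^ 5) := by
  have hR : ContinuousAt (tripleJumpRemainder a) 0 := by
    unfold tripleJumpRemainder
    fun_prop
  refine ((isBigO_pow_smul hR 5).sub MH_sub_MHTaylor_isBigO).congr_left fun z => ?_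
  rw [L_mul_L_mul_L_eq a b z hb hcube]
  abel

lemma two_mul_inv_two_sub_pow_three_add_eq_zero (c : ℂ) (hc : c ^ 3 = 2) :
    2 * (2 - c)⁻¹ ^ 3 + (1 - 2 * (2 - c)⁻¹) ^ 3 = 0 := by
  have hne : (2 : ℂ) - c ≠ 0 := by
    intro h
    rw [← sub_eq_zero.1 h] at hc
    norm_num at hc
  field_simp
  linear_combination -hc

lemma rpow_mul_exp_pow_three :
    (((2 : ℝ) ^ ((1 : ℝ) / 3) : ℝ) * exp (2 * Real.pi * I / 3) : ℂ) ^ 3 = 2 := by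
  have hroot : ((2 : ℝ) ^ ((1 : ℝ) / 3)) ^ 3 = 2 := by
    rw [← Real.rpow_natCast, ← Real.rpow_mul (by norm_num)]
    norm_num
  rw [mul_pow, ← exp_nat_mul, ← ofReal_pow, hroot]
  push_cast
  rw [show (3 : ℂ) * (2 * Real.pi * I / 3) = 2 * Real.pi * I by ring, exp_two_pi_mul_I, mul_one]

lemma two_mul_β₁_pow_three_add_β₂_pow_three : 2 * β₁ ^ 3 + β₂ ^ 3 = 0 :=
  two_mul_inv_two_sub_pow_three_add_eq_zero _ rpow_mul_exp_pow_three

/-- the complex triple-jump composition `S_{α₁h} ∘ S_{α₂h} ∘ S_{α₁h}`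
is a method of order 4 for the harmonic oscillator. -/
theorem complex_triple_jump_order_four :
    (fun h : ℝ => Tjump h - MH (h : ℂ)) =O[nhds 0] fun h : ℝ => h ^ 5 := by
  have hC := L_mul_L_mul_L_sub_MH_isBigO β₁ β₂ rfl two_mul_β₁_pow_three_add_β₂_pow_three
  have hR := hC.comp_tendsto (continuous_ofReal.tendsto' 0 0 ofReal_zero)
  exact hR.trans (isBigO_of_le _ fun h => by simp)
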